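/- Let d ≥ 1, ζ ∈ 𝒮, M ≥ 2 even, and let L = (ℓ, l) be a localization datum in Λ(M). Let (𝒜, ‖·‖) be a normed vector space, let Φ assign to each subset Z ⊆ Λ(M) an element Φ(Z) ∈ 𝒜 with Φ(∅) = 0, and suppose there is K ≥ 0 such that ∑_{Z⊆Λ(M): {x,y}⊆Z} ‖Φ(Z)‖ ≤ K·F_ζ(d^Λ_L(x,y)) for all x,y ∈ Λ(M). Then ‖∑_{Z⊆Λ(M)} Φ(Z)‖ ≤ C_ζ·K·M^{d−|ℓ|}, where C_ζ := ‖F‖_Γ · ∑_{z∈ℤ^{|ℓ|}} ζ(‖z‖₁) < ∞. (Lemma C.2: the norm of a local L-localized Hamiltonian grows at most like M^{d−|ℓ|}.) -/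

import Mathlib

open scoped BigOperators

/-- `F r = (1+r)^{-(d+1)}`. -/
noncomputable def Ffun (d : ℕ) (r : ℝ) : ℝ := ((1 + r) ^ (d + 1))⁻¹

/-- ℓ¹ norm on `ℤ^d`, valued in `ℕ`. -/
def l1norm {d : ℕ} (y : Fin d → ℤ) : ℕ := ∑ j, (y j).natAbs

/-- `‖F‖_Γ := ∑_{y ∈ ℤ^d} F(‖y‖₁)`. -/
noncomputable def FnormGamma (d : ℕ) : ℝ := ∑' y : Fin d → ℤ, Ffun d (l1norm y)

/-- The quotient ℓ¹-metric on `ℤ/Mℤ`: `min_{k∈ℤ} |b + kM|` where `b` is any lift of `v - u`. -/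
def torusD (M : ℕ) (u v : ZMod M) : ℕ := min (v - u).val (M - (v - u).val)

/-- The quotient ℓ¹-metric `d^Λ` on the discrete torus `Λ(M) = (ℤ/Mℤ)^d`. -/
def dTorus {M d : ℕ} (x y : Fin d → ZMod M) : ℕ := ∑ j, torusD M (x j) (y j)

/-- `dist(x, L)` for a localization datum `L = (ℓ, l)`. -/
def distLoc {M d : ℕ} (ℓ : Fin d → Bool) (l : Fin d → ZMod M) (x : Fin d → ZMod M) : ℕ :=
  ∑ j, if ℓ j then torusD M (x j) (l j) else 0

/-- The weighted "metric" `d^Λ_L(x,y) = d^Λ(x,y) + dist(x,L) + dist(y,L)`. -/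
def dTorusL {M d : ℕ} (ℓ : Fin d → Bool) (l : Fin d → ZMod M) (x y : Fin d → ZMod M) : ℕ :=
  dTorus x y + distLoc ℓ l x + distLoc ℓ l y

/-- The set `𝒮` of weight functions: positive, bounded, non-increasing, log-superadditive
functions on `[0,∞)` decaying faster than any inverse power. -/
def InS (ζ : ℝ → ℝ) : Prop :=
  (∀ r : ℝ, 0 ≤ r → 0 < ζ r) ∧
  BddAbove (ζ '' Set.Ici (0 : ℝ)) ∧
  (∀ r s : ℝ, 0 ≤ r → r ≤ s → ζ s ≤ ζ r) ∧
  (∀ r s : ℝ, 0 ≤ r → 0 ≤ s → ζ r * ζ s ≤ ζ (r + s)) ∧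
  (∀ n : ℕ, ∃ C : ℝ, ∀ r : ℝ, 0 ≤ r → r ^ n * ζ r ≤ C)

/-- `F_ζ r = ζ(r)/(1+r)^{d+1}`. -/
noncomputable def Fzeta (d : ℕ) (ζ : ℝ → ℝ) (r : ℝ) : ℝ := ζ r * ((1 + r) ^ (d + 1))⁻¹

/-!
As `Φ ∅ = 0`, `‖∑_Z Φ(Z)‖ ≤ ∑_Z |Z|·‖Φ(Z)‖ = ∑_x ∑_{Z ∋ x} ‖Φ(Z)‖`, and the diagonal case `y = x`
of the hypothesis bounds the inner sum by `K·ζ(dist(x, L))`, because `F ≤ 1`, `ζ` is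
non-increasing and `d^Λ_L(x, x) = 2·dist(x, L)`. This depends only on the `|ℓ|` localized
coordinates of `x`: the `d - |ℓ|` free coordinates contribute the factor `M^{d-|ℓ|}`, and centred
lifts `ZMod M → ℤ` embed the localized coordinates isometrically into `ℤ^{|ℓ|}`, which bounds the
rest by `∑_z ζ(‖z‖₁)`. It remains that `‖F‖_Γ ≥ F(0) = 1`; both this series and `∑_z ζ(‖z‖₁)`
converge by comparison with products of one-dimensional `p`-series.
-/

open Finset

lemma summable_inv_one_add_abs_rpow {p : ℝ} (hp : 1 < p) :
    Summable (fun n : ℤ => ((1 + |(n : ℝ)|) ^ p)⁻¹) := by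
  have hnat : Summable (fun n : ℕ => ((1 + (n : ℝ)) ^ p)⁻¹) := by
    have := (summable_nat_add_iff 1).mpr (Real.summable_nat_rpow_inv.mpr hp)
    exact this.congr fun n => by push_cast; rw [add_comm]
  exact .of_nat_of_neg (by simpa using hnat) (by simpa using hnat)

lemma summable_fin_pi_prod {α : Type*} {k : ℕ} {g : α → ℝ} (hg0 : ∀ a, 0 ≤ g a) (hg : Summable g) :
    Summable (fun z : Fin k → α => ∏ j, g (z j)) := by
  induction k with
  | zero => exact .of_finite
  | succ k ih =>
    have hprod := hg.mul_of_nonneg ih hg0 fun z => prod_nonneg fun j _ => hg0 _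
    refine (hprod.comp_injective (Fin.consEquiv fun _ => α).symm.injective).congr fun z => ?_
    simp [Fin.consEquiv, Fin.prod_univ_succ, Fin.tail]

lemma prod_one_add_abs_le_pow_l1norm {k : ℕ} (z : Fin k → ℤ) :
    ∏ j, (1 + |(z j : ℝ)|) ≤ (1 + (l1norm z : ℝ)) ^ k := by
  have hcoord (j : Fin k) : |(z j : ℝ)| ≤ l1norm z := by
    rw [← Int.cast_abs, ← Int.natCast_natAbs, Int.cast_natCast, Nat.cast_le]
    exact single_le_sum (f := fun j => (z j).natAbs) (fun _ _ => Nat.zero_le _) (mem_univ j)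
  calc ∏ j, (1 + |(z j : ℝ)|) ≤ ∏ _j : Fin k, (1 + (l1norm z : ℝ)) :=
        prod_le_prod (fun j _ => by positivity) fun j _ => by linarith [hcoord j]
    _ = (1 + (l1norm z : ℝ)) ^ k := by simp

lemma summable_inv_one_add_l1norm_pow {k n : ℕ} (hkn : k < n) :
    Summable (fun z : Fin k → ℤ => ((1 + (l1norm z : ℝ)) ^ n)⁻¹) := by
  set p : ℝ := 2 * n / (2 * k + 1)
  have hkn' : (k : ℝ) + 1 ≤ n := by exact_mod_cast hkn
  have hp : 1 < p := by rw [lt_div_iff₀ (by positivity)]; linarith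
  have hkp : k * p ≤ n := by
    rw [mul_div_assoc', div_le_iff₀ (by positivity)]; nlinarith
  have hprod := summable_fin_pi_prod (k := k) (fun _ => by positivity)
    (summable_inv_one_add_abs_rpow hp)
  refine hprod.of_nonneg_of_le (fun _ => by positivity) fun z => ?_
  have hs : 1 ≤ 1 + (l1norm z : ℝ) := by simp
  rw [prod_inv_distrib, Real.finsetProd_rpow _ _ fun _ _ => by positivity]
  gcongr
  calc (∏ j, (1 + |(z j : ℝ)|)) ^ p ≤ ((1 + (l1norm z : ℝ)) ^ k) ^ p := by
        gcongr; exact prod_one_add_abs_le_pow_l1norm z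
    _ = (1 + (l1norm z : ℝ)) ^ ((k : ℝ) * p) := by rw [Real.rpow_natCast_mul (by positivity)]
    _ ≤ (1 + (l1norm z : ℝ)) ^ (n : ℝ) := Real.rpow_le_rpow_of_exponent_le hs hkp
    _ = (1 + (l1norm z : ℝ)) ^ n := Real.rpow_natCast _ _

lemma summable_Ffun_l1norm (d : ℕ) : Summable (fun y : Fin d → ℤ => Ffun d (l1norm y)) :=
  summable_inv_one_add_l1norm_pow d.lt_succ_self

lemma Ffun_pos (d : ℕ) {r : ℝ} (hr : 0 ≤ r) : 0 < Ffun d r := by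
  unfold Ffun; positivity

lemma Ffun_le_one (d : ℕ) {r : ℝ} (hr : 0 ≤ r) : Ffun d r ≤ 1 :=
  inv_le_one_of_one_le₀ (one_le_pow₀ (by linarith))

lemma one_le_FnormGamma (d : ℕ) : 1 ≤ FnormGamma d := by
  have h := (summable_Ffun_l1norm d).le_tsum 0 fun y _ => (Ffun_pos d (Nat.cast_nonneg _)).le
  rwa [show Ffun d (l1norm (0 : Fin d → ℤ)) = 1 by simp [Ffun, l1norm]] at h

lemma InS.exists_le_mul_inv_one_add_pow {ζ : ℝ → ℝ} (hζ : InS ζ) (m : ℕ) :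
    ∃ C : ℝ, ∀ r : ℝ, 0 ≤ r → ζ r ≤ C * ((1 + r) ^ m)⁻¹ := by
  obtain ⟨hpos, -, -, -, hdecay⟩ := hζ
  obtain ⟨C₀, hC₀⟩ := hdecay 0
  obtain ⟨Cₘ, hCₘ⟩ := hdecay m
  refine ⟨2 ^ (m - 1) * (C₀ + Cₘ), fun r hr => ?_⟩
  rw [le_mul_inv_iff₀ (by positivity)]
  have h₀ := hC₀ r hr
  rw [pow_zero, one_mul] at h₀
  calc ζ r * (1 + r) ^ m ≤ ζ r * (2 ^ (m - 1) * (1 ^ m + r ^ m)) :=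
        mul_le_mul_of_nonneg_left (add_pow_le zero_le_one hr m) (hpos r hr).le
    _ = 2 ^ (m - 1) * (ζ r + r ^ m * ζ r) := by ring
    _ ≤ 2 ^ (m - 1) * (C₀ + Cₘ) := by gcongr; exact hCₘ r hr

lemma InS.summable_l1norm {ζ : ℝ → ℝ} (hζ : InS ζ) (k : ℕ) :
    Summable (fun z : Fin k → ℤ => ζ (l1norm z)) := by
  obtain ⟨C, hC⟩ := hζ.exists_le_mul_inv_one_add_pow (k + 1)
  exact ((summable_inv_one_add_l1norm_pow k.lt_succ_self).mul_left C).of_nonneg_of_le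
    (fun z => (hζ.1 _ (Nat.cast_nonneg _)).le) fun z => hC _ (Nat.cast_nonneg _)

lemma Fzeta_le (d : ℕ) {ζ : ℝ → ℝ} {r : ℝ} (hζ : 0 ≤ ζ r) (hr : 0 ≤ r) : Fzeta d ζ r ≤ ζ r :=
  mul_le_of_le_one_right hζ (Ffun_le_one d hr)

lemma dTorusL_self {M d : ℕ} [NeZero M] (ℓ : Fin d → Bool) (l x : Fin d → ZMod M) :
    dTorusL ℓ l x x = distLoc ℓ l x + distLoc ℓ l x := by
  simp [dTorusL, dTorus, torusD]

lemma InS.Fzeta_dTorusL_self_le {ζ : ℝ → ℝ} (hζ : InS ζ) {M d : ℕ} [NeZero M]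
    (ℓ : Fin d → Bool) (l x : Fin d → ZMod M) :
    Fzeta d ζ (dTorusL ℓ l x x) ≤ ζ (distLoc ℓ l x) := by
  obtain ⟨hpos, -, hanti, -, -⟩ := hζ
  refine (Fzeta_le d (hpos _ (Nat.cast_nonneg _)).le (Nat.cast_nonneg _)).trans ?_
  exact hanti _ _ (Nat.cast_nonneg _) (by rw [dTorusL_self]; push_cast; linarith)

lemma distLoc_eq_sum_subtype {M d : ℕ} (ℓ : Fin d → Bool) (l x : Fin d → ZMod M) :
    distLoc ℓ l x = ∑ j : {j // ℓ j = true}, torusD M (x j) (l j) := by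
  rw [distLoc, ← sum_filter]
  exact sum_subtype _ (fun j => by simp) _

lemma sum_distLoc {M d : ℕ} [NeZero M] (ℓ : Fin d → Bool) (l : Fin d → ZMod M)
    {β : Type*} [AddCommMonoid β] (f : ℕ → β) :
    ∑ x : Fin d → ZMod M, f (distLoc ℓ l x) =
      M ^ (d - #(univ.filter fun j => ℓ j = true)) •
        ∑ a : {j // ℓ j = true} → ZMod M, f (∑ j, torusD M (a j) (l j)) := by
  set E := Equiv.piEquivPiSubtypeProd (fun j => ℓ j = true) fun _ => ZMod M
  have hE (a b) (j : {j // ℓ j = true}) : E.symm (a, b) j = a j := dif_pos j.2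
  rw [← E.symm.sum_comp, Fintype.sum_prod_type_right]
  simp only [distLoc_eq_sum_subtype, hE, sum_const, card_univ, Fintype.card_fun, ZMod.card,
    Fintype.card_subtype]
  have hcard := card_filter_add_card_filter_not (s := univ) fun j => ℓ j = true
  rw [card_univ, Fintype.card_fin] at hcard
  rw [← Nat.sub_eq_of_eq_add' hcard.symm]

lemma sum_le_tsum_l1norm {ι : Type*} [Fintype ι] [DecidableEq ι] {M k : ℕ} [NeZero M]
    (e : ι ≃ Fin k) (l : ι → ZMod M) {f : ℕ → ℝ} (hf0 : ∀ n, 0 ≤ f n)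
    (hf : Summable fun z : Fin k → ℤ => f (l1norm z)) :
    ∑ a : ι → ZMod M, f (∑ j, torusD M (a j) (l j)) ≤ ∑' z : Fin k → ℤ, f (l1norm z) := by
  let lift : (ι → ZMod M) → Fin k → ℤ := fun a i => (l (e.symm i) - a (e.symm i)).valMinAbs
  have hlift_inj : Function.Injective lift := by
    intro a a' h
    funext j
    simpa [lift] using congrArg (fun z : Fin k → ℤ => (z (e j) : ZMod M)) h
  have hlift_norm (a) : l1norm (lift a) = ∑ j, torusD M (a j) (l j) := by
    simp only [l1norm, lift, ZMod.valMinAbs_natAbs_eq_min, torusD]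
    exact e.symm.sum_comp fun j => min (l j - a j).val (M - (l j - a j).val)
  calc ∑ a : ι → ZMod M, f (∑ j, torusD M (a j) (l j)) = ∑' a, f (l1norm (lift a)) := by
        simp only [hlift_norm, tsum_fintype]
    _ ≤ ∑' z : Fin k → ℤ, f (l1norm z) := tsum_comp_le_tsum_of_inj hf (fun z => hf0 _) hlift_inj

lemma norm_sum_le_sum_sum_filter_mem {α E : Type*} [Fintype α] [DecidableEq α]
    [SeminormedAddCommGroup E] (Φ : Finset α → E) (hΦ : Φ ∅ = 0) :
    ‖∑ Z, Φ Z‖ ≤ ∑ x, ∑ Z ∈ univ.filter (fun Z => x ∈ Z), ‖Φ Z‖ := by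
  have hcount (Z : Finset α) : ‖Φ Z‖ ≤ #Z • ‖Φ Z‖ := by
    rcases Z.eq_empty_or_nonempty with rfl | hZ
    · simp [hΦ]
    · exact le_smul_of_one_le_left (norm_nonneg _) hZ.card_pos
  calc ‖∑ Z, Φ Z‖ ≤ ∑ Z, ‖Φ Z‖ := norm_sum_le _ _
    _ ≤ ∑ Z, #Z • ‖Φ Z‖ := sum_le_sum fun Z _ => hcount Z
    _ = ∑ x, ∑ Z ∈ univ.filter (fun Z => x ∈ Z), ‖Φ Z‖ := by
      simp only [sum_filter]; rw [sum_comm]; simp [sum_ite_mem]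

theorem statement11_general (d : ℕ) (ζ : ℝ → ℝ) (hζ : InS ζ)
    (M : ℕ) [NeZero M]
    (ℓ : Fin d → Bool) (l : Fin d → ZMod M)
    (𝒜 : Type*) [NormedAddCommGroup 𝒜]
    (Φ : Finset (Fin d → ZMod M) → 𝒜) (hΦ0 : Φ ∅ = 0)
    (K : ℝ) (hK : 0 ≤ K)
    (hΦ : ∀ x y : Fin d → ZMod M,
      ∑ Z ∈ Finset.univ.filter (fun Z : Finset (Fin d → ZMod M) => x ∈ Z ∧ y ∈ Z), ‖Φ Z‖ ≤
        K * Fzeta d ζ (dTorusL ℓ l x y)) :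
    Summable (fun z : Fin ((Finset.univ.filter fun j => ℓ j = true).card) → ℤ =>
      ζ (l1norm z)) ∧
    ‖∑ Z : Finset (Fin d → ZMod M), Φ Z‖ ≤
      (FnormGamma d *
        ∑' z : Fin ((Finset.univ.filter fun j => ℓ j = true).card) → ℤ, ζ (l1norm z)) *
        K * (M : ℝ) ^ (d - (Finset.univ.filter fun j => ℓ j = true).card) := by
  set k := #(univ.filter fun j => ℓ j = true)
  have hζ0 (n : ℕ) : 0 ≤ ζ n := (hζ.1 n n.cast_nonneg).le
  have hsum := hζ.summable_l1norm k
  refine ⟨hsum, ?_⟩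
  calc ‖∑ Z, Φ Z‖ ≤ ∑ x, ∑ Z ∈ univ.filter (fun Z => x ∈ Z), ‖Φ Z‖ :=
        norm_sum_le_sum_sum_filter_mem Φ hΦ0
    _ ≤ ∑ x : Fin d → ZMod M, K * ζ (distLoc ℓ l x) := sum_le_sum fun x _ => by
        simpa using (hΦ x x).trans (mul_le_mul_of_nonneg_left (hζ.Fzeta_dTorusL_self_le ℓ l x) hK)
    _ = K * (M ^ (d - k) *
          ∑ a : {j // ℓ j = true} → ZMod M, ζ ↑(∑ j, torusD M (a j) (l j))) := by
        rw [← mul_sum, sum_distLoc ℓ l fun n => ζ n, nsmul_eq_mul, Nat.cast_pow]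
    _ ≤ K * (M ^ (d - k) * ∑' z : Fin k → ℤ, ζ (l1norm z)) := by
        have e : {j // ℓ j = true} ≃ Fin k := Fintype.equivFinOfCardEq (Fintype.card_subtype _)
        gcongr
        exact sum_le_tsum_l1norm e (fun j => l j) hζ0 hsum
    _ = (1 * ∑' z : Fin k → ℤ, ζ (l1norm z)) * K * M ^ (d - k) := by ring
    _ ≤ (FnormGamma d * ∑' z : Fin k → ℤ, ζ (l1norm z)) * K * M ^ (d - k) := by
        gcongr
        · exact tsum_nonneg fun z => hζ0 _
        · exact one_le_FnormGamma d

/-- Lemma C.2. If the interaction `Φ` with values in a normed vector space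
`𝒜` satisfies `∑_{Z ⊇ {x,y}} ‖Φ(Z)‖ ≤ K·F_ζ(d^Λ_L(x,y))` for all `x, y ∈ Λ(M)`, then
`‖∑_Z Φ(Z)‖ ≤ C_ζ·K·M^{d−|ℓ|}` with `C_ζ = ‖F‖_Γ·∑_{z∈ℤ^{|ℓ|}} ζ(‖z‖₁) < ∞`. -/
theorem statement11 (d : ℕ) (hd : 1 ≤ d) (ζ : ℝ → ℝ) (hζ : InS ζ)
    (M : ℕ) [NeZero M] (hM : Even M) (hM2 : 2 ≤ M)
    (ℓ : Fin d → Bool) (l : Fin d → ZMod M)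
    (𝒜 : Type*) [NormedAddCommGroup 𝒜] [NormedSpace ℝ 𝒜]
    (Φ : Finset (Fin d → ZMod M) → 𝒜) (hΦ0 : Φ ∅ = 0)
    (K : ℝ) (hK : 0 ≤ K)
    (hΦ : ∀ x y : Fin d → ZMod M,
      ∑ Z ∈ Finset.univ.filter (fun Z : Finset (Fin d → ZMod M) => x ∈ Z ∧ y ∈ Z), ‖Φ Z‖ ≤
        K * Fzeta d ζ (dTorusL ℓ l x y)) :
    Summable (fun z : Fin ((Finset.univ.filter fun j => ℓ j = true).card) → ℤ =>
      ζ (l1norm z)) ∧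
    ‖∑ Z : Finset (Fin d → ZMod M), Φ Z‖ ≤
      (FnormGamma d *
        ∑' z : Fin ((Finset.univ.filter fun j => ℓ j = true).card) → ℤ, ζ (l1norm z)) *
        K * (M : ℝ) ^ (d - (Finset.univ.filter fun j => ℓ j = true).card) :=
  statement11_general d ζ hζ M ℓ l 𝒜 Φ hΦ0 K hK hΦ
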